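/- Let p > 0, let r ≥ 2, let (Ω_i, 𝓕_i, P_i), 1 ≤ i ≤ r, be probability spaces, let X_i : Ω_i → [0,∞) be measurable with P_r(X_r > 0) > 0, let E_i be measurable spaces, let F_i : Ω_i → E_i be measurable for 1 ≤ i ≤ r−1, let G : Ω_r × [0,∞) → E_r be measurable, and let B_i ⊆ E_i be measurable sets. Write S(ω) = ∑_{i=1}^{r−1} X_i(ω_i) and let Q = P_1 ⊗ ⋯ ⊗ P_r ⊗ μ_p on Ω_1 × ⋯ × Ω_r × [0,∞), with coordinate ℓ on the last factor. Then the event C = {S(ω) < ℓ ≤ S(ω) + X_r(ω_r)} has Q(C) > 0, and Q(F_1(ω_1) ∈ B_1, …, F_{r−1}(ω_{r−1}) ∈ B_{r−1}, G(ω_r, ℓ − S(ω)) ∈ B_r │ C) = ∏_{i=1}^{r−1} (P_i ⊗ μ_p)(F_i(ω_i) ∈ B_i │ X_i(ω_i) < ℓ_i) · (P_r ⊗ μ_p)(G(ω_r, ℓ_r) ∈ B_r │ ℓ_r ≤ X_r(ω_r)). -/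

import Mathlib

/-!
Condition on the first `r - 1` coordinates `ω`. By memorylessness of the exponential law, on
`{S(ω) < ℓ}` the overshoot `ℓ - S(ω)` is again exponential of rate `p`, and
`μ_p(S(ω) < ℓ) = e^{-p S(ω)} = ∏ᵢ e^{-p Xᵢ(ωᵢ)}`. Integrating over the product measure turns
this product into a product of integrals, so
`Q(C, Fᵢ ∈ Bᵢ, G ∈ B_r) = ∏ᵢ (Pᵢ ⊗ μ_p)(Xᵢ < ℓ, Fᵢ ∈ Bᵢ) · (P_r ⊗ μ_p)(ℓ ≤ X_r, G ∈ B_r)`.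
Dividing by the same identity for the trivial events `Bᵢ = Eᵢ`, `B_r = E_r` gives the claim.
-/

open MeasureTheory ProbabilityTheory NNReal ENNReal

open Set

namespace ENNReal

lemma inv_prod_mul_mul_prod_mul {ι : Type*} (s : Finset ι) {a c : ι → ℝ≥0∞} {b d : ℝ≥0∞}
    (ha : ∀ i ∈ s, a i ≠ 0) (hb : b ≠ 0) :
    ((∏ i ∈ s, a i) * b)⁻¹ * ((∏ i ∈ s, c i) * d) = (∏ i ∈ s, (a i)⁻¹ * c i) * (b⁻¹ * d) := by
  rw [ENNReal.mul_inv (.inl (Finset.prod_ne_zero_iff.mpr ha)) (.inr hb),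
    ENNReal.prod_inv_distrib fun i hi _ _ _ => .inl (ha i hi), Finset.prod_mul_distrib]
  ring

end ENNReal

namespace MeasureTheory

lemma lintegral_fintype_prod_eq_prod {ι : Type*} [Fintype ι] {Ω : ι → Type*} [∀ i, MeasurableSpace (Ω i)]
    (P : ∀ i, Measure (Ω i)) [∀ i, IsProbabilityMeasure (P i)] {f : ∀ i, Ω i → ℝ≥0∞}
    (hf : ∀ i, Measurable (f i)) :
    ∫⁻ ω, ∏ i, f i (ω i) ∂Measure.pi P = ∏ i, ∫⁻ x, f i x ∂P i := by
  rw [lintegral_prod_eq_prod_lintegral_of_indepFun _ _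
    (iIndepFun_pi fun i => (hf i).aemeasurable) fun i => (hf i).comp (measurable_pi_apply i)]
  exact Finset.prod_congr rfl fun i _ => (measurePreserving_eval P i).lintegral_comp (hf i)

end MeasureTheory

namespace ProbabilityTheory

variable {p s : ℝ}

instance sFinite_expMeasure : SFinite (expMeasure p) :=
  inferInstanceAs (SFinite (volume.withDensity _))

lemma map_sub_restrict_Ioi_expMeasure (hs : 0 ≤ s) :
    ((expMeasure p).restrict (Ioi s)).map (· - s) =
      ENNReal.ofReal (Real.exp (-(p * s))) • expMeasure p := by
  have hsub : Measurable (· - s : ℝ → ℝ) := measurable_sub_const s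
  have hν : expMeasure p = volume.withDensity (exponentialPDF p) := rfl
  ext T hT
  -- on `Ici s` the identity of densities below holds pointwise, also at `t = 0`
  rw [hν, restrict_Ioi_eq_restrict_Ici, Measure.map_apply hsub hT,
    Measure.restrict_apply (hsub hT), Measure.smul_apply, smul_eq_mul,
    withDensity_apply _ ((hsub hT).inter measurableSet_Ici), withDensity_apply _ hT,
    ← lintegral_indicator ((hsub hT).inter measurableSet_Ici), ← lintegral_indicator hT,
    ← lintegral_const_mul' _ _ ENNReal.ofReal_ne_top,
    ← (measurePreserving_add_right volume s).lintegral_comp_emb (measurableEmbedding_addRight s)]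
  refine lintegral_congr fun t => ?_
  rcases lt_or_ge t 0 with ht | ht
  · have hts : t + s ∉ (· - s) ⁻¹' T ∩ Ici s := fun h => by simp at h; linarith [h.2]
    simp [indicator_of_notMem hts, exponentialPDF_of_neg ht]
  · by_cases htT : t ∈ T
    · rw [indicator_of_mem (by simpa using ⟨htT, ht⟩), indicator_of_mem htT,
        exponentialPDF_of_nonneg (by linarith), exponentialPDF_of_nonneg ht,
        ← ENNReal.ofReal_mul (Real.exp_nonneg _), mul_left_comm, ← Real.exp_add]
      ring_nf
    · rw [indicator_of_notMem (by simpa using fun h => absurd h htT), indicator_of_notMem htT,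
        mul_zero]

lemma expMeasure_Ioi (hp : 0 < p) (hs : 0 ≤ s) :
    expMeasure p (Ioi s) = ENNReal.ofReal (Real.exp (-(p * s))) := by
  have := isProbabilityMeasure_expMeasure hp
  have h := congr($(map_sub_restrict_Ioi_expMeasure (p := p) hs) univ)
  rwa [Measure.map_apply (measurable_sub_const s) .univ, preimage_univ,
    Measure.restrict_apply .univ, univ_inter, Measure.smul_apply, measure_univ, smul_eq_mul,
    mul_one] at h

lemma expMeasure_Iic_pos (hp : 0 < p) {x : ℝ} (hx : 0 < x) : 0 < expMeasure p (Iic x) := by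
  have := isProbabilityMeasure_expMeasure hp
  rw [← ofReal_cdf, cdf_expMeasure_eq hp, if_pos hx.le, ENNReal.ofReal_pos, sub_pos,
    Real.exp_lt_one_iff, neg_lt_zero]
  positivity

lemma map_prodMap_sub_restrict_prod_expMeasure {α : Type*} [MeasurableSpace α]
    (μ : Measure α) [SFinite μ] (hs : 0 ≤ s) :
    ((μ.prod (expMeasure p)).restrict (univ ×ˢ Ioi s)).map (Prod.map id (· - s)) =
      ENNReal.ofReal (Real.exp (-(p * s))) • μ.prod (expMeasure p) := by
  rw [← Measure.prod_restrict, Measure.restrict_univ, ← Measure.map_prod_map _ _ measurable_id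
    (measurable_sub_const s), Measure.map_id, map_sub_restrict_Ioi_expMeasure hs,
    Measure.prod_smul_right]

lemma prod_prod_expMeasure_setOf_lt_sub_mem {Ω β : Type*} [MeasurableSpace Ω] [MeasurableSpace β]
    (μ : Measure Ω) [SFinite μ] (ρ : Measure β) [SFinite ρ] {S : Ω → ℝ} (hS : Measurable S)
    (hS0 : ∀ ω, 0 ≤ S ω) {A : Set Ω} (hA : MeasurableSet A) {D : Set (β × ℝ)}
    (hD : MeasurableSet D) :
    μ.prod (ρ.prod (expMeasure p)) {z | S z.1 < z.2.2 ∧ z.1 ∈ A ∧ (z.2.1, z.2.2 - S z.1) ∈ D} =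
      (∫⁻ ω in A, ENNReal.ofReal (Real.exp (-(p * S ω))) ∂μ) * ρ.prod (expMeasure p) D := by
  have hmeas : MeasurableSet
      {z : Ω × β × ℝ | S z.1 < z.2.2 ∧ z.1 ∈ A ∧ (z.2.1, z.2.2 - S z.1) ∈ D} :=
    (measurableSet_lt (hS.comp measurable_fst) (measurable_snd.comp measurable_snd)).inter
      ((measurable_fst hA).inter (((measurable_fst.comp measurable_snd).prodMk
        ((measurable_snd.comp measurable_snd).sub (hS.comp measurable_fst))) hD))
  have hshift : ∀ s, 0 ≤ s → ρ.prod (expMeasure p) {y | s < y.2 ∧ (y.1, y.2 - s) ∈ D} =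
      ENNReal.ofReal (Real.exp (-(p * s))) * ρ.prod (expMeasure p) D := fun s hs => by
    have h := congr($(map_prodMap_sub_restrict_prod_expMeasure (p := p) ρ hs) D)
    rw [Measure.map_apply (measurable_id.prodMap (measurable_sub_const s)) hD,
      Measure.restrict_apply (measurable_id.prodMap (measurable_sub_const s) hD),
      Measure.smul_apply, smul_eq_mul] at h
    convert h using 2
    ext ⟨b, ℓ⟩
    simp [and_comm]
  rw [Measure.prod_apply hmeas, ← lintegral_indicator hA, ← lintegral_mul_const]
  · refine lintegral_congr fun ω => ?_
    by_cases hω : ω ∈ A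
    · simpa [hω] using hshift (S ω) (hS0 ω)
    · simp [hω]
  · exact (Real.measurable_exp.comp (hS.const_mul p).neg).ennreal_ofReal.indicator hA

lemma prod_expMeasure_setOf_lt_inter {Ω : Type*} [MeasurableSpace Ω] (μ : Measure Ω)
    [SFinite μ] (hp : 0 < p) {X : Ω → ℝ} (hX : Measurable X) (hX0 : ∀ ω, 0 ≤ X ω) {A : Set Ω}
    (hA : MeasurableSet A) :
    μ.prod (expMeasure p) ({y | X y.1 < y.2} ∩ {y | y.1 ∈ A}) =
      ∫⁻ ω in A, ENNReal.ofReal (Real.exp (-(p * X ω))) ∂μ := by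
  have hmeas : MeasurableSet ({y : Ω × ℝ | X y.1 < y.2} ∩ {y | y.1 ∈ A}) :=
    (measurableSet_lt (hX.comp measurable_fst) measurable_snd).inter (measurable_fst hA)
  rw [Measure.prod_apply hmeas, ← lintegral_indicator hA]
  refine lintegral_congr fun ω => ?_
  by_cases hω : ω ∈ A
  · rw [indicator_of_mem hω, ← expMeasure_Ioi hp (hX0 ω)]
    congr 1
    ext ℓ
    simp [hω]
  · rw [indicator_of_notMem hω, ← measure_empty (μ := expMeasure p)]
    congr 1
    ext ℓ
    simp [hω]

lemma prod_expMeasure_setOf_lt_pos {Ω : Type*} [MeasurableSpace Ω] (μ : Measure Ω)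
    [SFinite μ] [NeZero μ] (hp : 0 < p) {X : Ω → ℝ} (hX : Measurable X) (hX0 : ∀ ω, 0 ≤ X ω) :
    0 < μ.prod (expMeasure p) {y | X y.1 < y.2} := by
  have hf : Measurable fun ω => ENNReal.ofReal (Real.exp (-(p * X ω))) :=
    (Real.measurable_exp.comp (hX.const_mul p).neg).ennreal_ofReal
  have h := prod_expMeasure_setOf_lt_inter μ hp hX hX0 .univ
  simp only [mem_univ, ofPred_true, inter_univ, Measure.restrict_univ] at h
  rw [h, lintegral_pos_iff_support hf]
  simpa [Function.support, Real.exp_pos] using Measure.measure_univ_pos.mpr (NeZero.ne μ)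

lemma prod_expMeasure_setOf_le_pos {β : Type*} [MeasurableSpace β] {ρ : Measure β} [SFinite ρ]
    (hp : 0 < p) {Y : β → ℝ} (hY : Measurable Y) (hpos : 0 < ρ {b | 0 < Y b}) :
    0 < ρ.prod (expMeasure p) {y | y.2 ≤ Y y.1} := by
  have hmeas : MeasurableSet {y : β × ℝ | y.2 ≤ Y y.1} :=
    measurableSet_le measurable_snd (hY.comp measurable_fst)
  rw [Measure.prod_apply hmeas, lintegral_pos_iff_support (measurable_measure_prodMk_left hmeas)]
  exact hpos.trans_le (measure_mono fun b hb => (expMeasure_Iic_pos hp hb).ne')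

lemma setLIntegral_univ_pi_exp_neg_mul_sum {ι : Type*} [Fintype ι] {Ω : ι → Type*}
    [∀ i, MeasurableSpace (Ω i)] (P : ∀ i, Measure (Ω i)) [∀ i, IsProbabilityMeasure (P i)]
    (p : ℝ) {X : ∀ i, Ω i → ℝ} (hX : ∀ i, Measurable (X i)) {A : ∀ i, Set (Ω i)}
    (hA : ∀ i, MeasurableSet (A i)) :
    ∫⁻ ω in univ.pi A, ENNReal.ofReal (Real.exp (-(p * ∑ i, X i (ω i)))) ∂Measure.pi P =
      ∏ i, ∫⁻ ω in A i, ENNReal.ofReal (Real.exp (-(p * X i ω))) ∂P i := by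
  set g := fun i ω => ENNReal.ofReal (Real.exp (-(p * X i ω)))
  have hg : ∀ i, Measurable (g i) := fun i =>
    (Real.measurable_exp.comp ((hX i).const_mul p).neg).ennreal_ofReal
  have hprod : ∀ ω, (univ.pi A).indicator
      (fun ω => ENNReal.ofReal (Real.exp (-(p * ∑ i, X i (ω i))))) ω =
        ∏ i, (A i).indicator (g i) (ω i) := fun ω => by
    by_cases hω : ω ∈ univ.pi A
    · rw [indicator_of_mem hω, Finset.prod_congr rfl fun i _ => indicator_of_mem (hω i trivial) _,
        Finset.mul_sum, ← Finset.sum_neg_distrib, Real.exp_sum,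
        ENNReal.ofReal_prod_of_nonneg fun i _ => (Real.exp_pos _).le]
    · obtain ⟨i, -, hi⟩ := not_forall₂.mp hω
      rw [indicator_of_notMem hω,
        Finset.prod_eq_zero (Finset.mem_univ i) (indicator_of_notMem hi _)]
  rw [← lintegral_indicator (MeasurableSet.univ_pi hA), lintegral_congr hprod,
    lintegral_fintype_prod_eq_prod P fun i => (hg i).indicator (hA i)]
  exact Finset.prod_congr rfl fun i _ => lintegral_indicator (hA i) _

lemma pi_prod_prod_expMeasure_setOf_lt_sub_mem {ι : Type*} [Fintype ι] {Ω : ι → Type*}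
    [∀ i, MeasurableSpace (Ω i)] (P : ∀ i, Measure (Ω i)) [∀ i, IsProbabilityMeasure (P i)]
    {β : Type*} [MeasurableSpace β] (ρ : Measure β) [SFinite ρ] (hp : 0 < p)
    {X : ∀ i, Ω i → ℝ} (hX : ∀ i, Measurable (X i)) (hX0 : ∀ i ω, 0 ≤ X i ω)
    {A : ∀ i, Set (Ω i)} (hA : ∀ i, MeasurableSet (A i)) {D : Set (β × ℝ)}
    (hD : MeasurableSet D) :
    (Measure.pi P).prod (ρ.prod (expMeasure p))
        {z | ∑ i, X i (z.1 i) < z.2.2 ∧ z.1 ∈ univ.pi A ∧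
          (z.2.1, z.2.2 - ∑ i, X i (z.1 i)) ∈ D} =
      (∏ i, (P i).prod (expMeasure p) ({y | X i y.1 < y.2} ∩ {y | y.1 ∈ A i})) *
        ρ.prod (expMeasure p) D := by
  have hS : Measurable fun ω : ∀ i, Ω i => ∑ i, X i (ω i) :=
    Finset.measurable_sum _ fun i _ => (hX i).comp (measurable_pi_apply i)
  rw [prod_prod_expMeasure_setOf_lt_sub_mem _ _ hS (fun ω => Finset.sum_nonneg fun i _ => hX0 i _)
      (.univ_pi hA) hD,
    setLIntegral_univ_pi_exp_neg_mul_sum P p hX hA]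
  simp only [prod_expMeasure_setOf_lt_inter _ hp (hX _) (hX0 _) (hA _)]

end ProbabilityTheory

theorem cond_rebirth_exponential_factorization_general
    (p : ℝ) (hp : 0 < p)
    (r : ℕ)
    (Ω : Fin (r - 1) → Type*) [∀ i, MeasurableSpace (Ω i)]
    (P : ∀ i, Measure (Ω i)) [∀ i, IsProbabilityMeasure (P i)]
    (Ωr : Type*) [MeasurableSpace Ωr]
    (Pr : Measure Ωr) [IsProbabilityMeasure Pr]
    (X : ∀ i, Ω i → ℝ) (hX : ∀ i, Measurable (X i)) (hX_nonneg : ∀ i ω, 0 ≤ X i ω)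
    (Xr : Ωr → ℝ) (hXr : Measurable Xr)
    (hXr_pos : 0 < Pr {ω | 0 < Xr ω})
    (E : Fin (r - 1) → Type*) [∀ i, MeasurableSpace (E i)]
    (Er : Type*) [MeasurableSpace Er]
    (F : ∀ i, Ω i → E i) (hF : ∀ i, Measurable (F i))
    (G : Ωr → ℝ → Er) (hG : Measurable fun y : Ωr × ℝ => G y.1 y.2)
    (B : ∀ i, Set (E i)) (hB : ∀ i, MeasurableSet (B i))
    (Br : Set Er) (hBr : MeasurableSet Br) :
    0 < ((Measure.pi P).prod (Pr.prod (expMeasure p)))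
          {z : (∀ i, Ω i) × (Ωr × ℝ) |
            (∑ i, X i (z.1 i)) < z.2.2 ∧ z.2.2 ≤ (∑ i, X i (z.1 i)) + Xr z.2.1} ∧
    ((Measure.pi P).prod (Pr.prod (expMeasure p)))[|
        {z : (∀ i, Ω i) × (Ωr × ℝ) |
          (∑ i, X i (z.1 i)) < z.2.2 ∧ z.2.2 ≤ (∑ i, X i (z.1 i)) + Xr z.2.1}]
      {z : (∀ i, Ω i) × (Ωr × ℝ) |
        (∀ i, F i (z.1 i) ∈ B i) ∧ G z.2.1 (z.2.2 - ∑ i, X i (z.1 i)) ∈ Br}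
    = (∏ i, ((P i).prod (expMeasure p))[|{y : Ω i × ℝ | X i y.1 < y.2}]
          {y : Ω i × ℝ | F i y.1 ∈ B i})
      * (Pr.prod (expMeasure p))[|{y : Ωr × ℝ | y.2 ≤ Xr y.1}]
          {y : Ωr × ℝ | G y.1 y.2 ∈ Br} := by
  have hL : MeasurableSet {y : Ωr × ℝ | y.2 ≤ Xr y.1} :=
    measurableSet_le (by fun_prop) (by fun_prop)
  have hC : MeasurableSet {z : (∀ i, Ω i) × (Ωr × ℝ) |
      (∑ i, X i (z.1 i)) < z.2.2 ∧ z.2.2 ≤ (∑ i, X i (z.1 i)) + Xr z.2.1} := by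
    measurability
  have hlt : ∀ i, MeasurableSet {y : Ω i × ℝ | X i y.1 < y.2} := fun i =>
    measurableSet_lt (by fun_prop) (by fun_prop)
  have hQC := pi_prod_prod_expMeasure_setOf_lt_sub_mem P Pr hp hX hX_nonneg (fun _ => .univ) hL
  have hQCA := pi_prod_prod_expMeasure_setOf_lt_sub_mem P Pr hp hX hX_nonneg (fun i => hF i (hB i))
    (D := {y | y.2 ≤ Xr y.1} ∩ {y | G y.1 y.2 ∈ Br}) (hL.inter (hG hBr))
  simp only [mem_univ_pi, mem_univ, implies_true, true_and, ofPred_true, inter_univ,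
    mem_ofPred_eq, sub_le_iff_le_add'] at hQC
  have hden : ∀ i, (P i).prod (expMeasure p) {y | X i y.1 < y.2} ≠ 0 := fun i =>
    (prod_expMeasure_setOf_lt_pos (P i) hp (hX i) (hX_nonneg i)).ne'
  have hden_r : Pr.prod (expMeasure p) {y | y.2 ≤ Xr y.1} ≠ 0 :=
    (prod_expMeasure_setOf_le_pos hp hXr hXr_pos).ne'
  refine ⟨hQC ▸ ENNReal.mul_pos (Finset.prod_ne_zero_iff.mpr fun i _ => hden i) hden_r, ?_⟩
  rw [cond_apply hC, hQC, cond_apply hL, Finset.prod_congr rfl fun i _ => cond_apply (hlt i) _ _,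
    ← ENNReal.inv_prod_mul_mul_prod_mul _ (fun i _ => hden i) hden_r]
  congr 1
  simp only [mem_preimage] at hQCA
  convert hQCA using 2
  ext z
  simp only [mem_inter_iff, mem_ofPred_eq, mem_univ_pi, mem_preimage, sub_le_iff_le_add']
  tauto

/-- The measure-theoretic core of Lemma 4.2 of the paper (equation (n70.5mp)).  With
`r ≥ 2` probability spaces (the first `r-1` indexed by `Fin (r-1)`, the `r`-th being
`Ωr`), nonnegative measurable `X_i` with `P_r(X_r > 0) > 0`, measurable
`F_i : Ω_i → E_i` (`1 ≤ i ≤ r-1`), measurable `G : Ω_r × [0,∞) → E_r`, measurable sets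
`B_i`, `S(ω) = ∑_{i=1}^{r-1} X_i(ω_i)`, `μ_p` the exponential distribution of rate
`p > 0`, and `Q = P_1 ⊗ ⋯ ⊗ P_r ⊗ μ_p`: the event
`C = {S(ω) < ℓ ≤ S(ω) + X_r(ω_r)}` has `Q(C) > 0` and
`Q(F_1(ω_1) ∈ B_1, …, F_{r-1}(ω_{r-1}) ∈ B_{r-1}, G(ω_r, ℓ - S(ω)) ∈ B_r │ C)
  = ∏_i (P_i ⊗ μ_p)(F_i ∈ B_i │ X_i < ℓ_i) · (P_r ⊗ μ_p)(G ∈ B_r │ ℓ_r ≤ X_r)`. -/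
theorem cond_rebirth_exponential_factorization
    (p : ℝ) (hp : 0 < p)
    (r : ℕ) (hr : 2 ≤ r)
    (Ω : Fin (r - 1) → Type*) [∀ i, MeasurableSpace (Ω i)]
    (P : ∀ i, Measure (Ω i)) [∀ i, IsProbabilityMeasure (P i)]
    (Ωr : Type*) [MeasurableSpace Ωr]
    (Pr : Measure Ωr) [IsProbabilityMeasure Pr]
    (X : ∀ i, Ω i → ℝ) (hX : ∀ i, Measurable (X i)) (hX_nonneg : ∀ i ω, 0 ≤ X i ω)
    (Xr : Ωr → ℝ) (hXr : Measurable Xr) (hXr_nonneg : ∀ ω, 0 ≤ Xr ω)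
    (hXr_pos : 0 < Pr {ω | 0 < Xr ω})
    (E : Fin (r - 1) → Type*) [∀ i, MeasurableSpace (E i)]
    (Er : Type*) [MeasurableSpace Er]
    (F : ∀ i, Ω i → E i) (hF : ∀ i, Measurable (F i))
    (G : Ωr → ℝ → Er) (hG : Measurable fun y : Ωr × ℝ => G y.1 y.2)
    (B : ∀ i, Set (E i)) (hB : ∀ i, MeasurableSet (B i))
    (Br : Set Er) (hBr : MeasurableSet Br) :
    0 < ((Measure.pi P).prod (Pr.prod (expMeasure p)))
          {z : (∀ i, Ω i) × (Ωr × ℝ) |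
            (∑ i, X i (z.1 i)) < z.2.2 ∧ z.2.2 ≤ (∑ i, X i (z.1 i)) + Xr z.2.1} ∧
    ((Measure.pi P).prod (Pr.prod (expMeasure p)))[|
        {z : (∀ i, Ω i) × (Ωr × ℝ) |
          (∑ i, X i (z.1 i)) < z.2.2 ∧ z.2.2 ≤ (∑ i, X i (z.1 i)) + Xr z.2.1}]
      {z : (∀ i, Ω i) × (Ωr × ℝ) |
        (∀ i, F i (z.1 i) ∈ B i) ∧ G z.2.1 (z.2.2 - ∑ i, X i (z.1 i)) ∈ Br}
    = (∏ i, ((P i).prod (expMeasure p))[|{y : Ω i × ℝ | X i y.1 < y.2}]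
          {y : Ω i × ℝ | F i y.1 ∈ B i})
      * (Pr.prod (expMeasure p))[|{y : Ωr × ℝ | y.2 ≤ Xr y.1}]
          {y : Ωr × ℝ | G y.1 y.2 ∈ Br} :=
  cond_rebirth_exponential_factorization_general p hp r Ω P Ωr Pr X hX hX_nonneg Xr hXr hXr_pos E Er
    F hF G hG B hB Br hBr
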